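/- Two infinite binary sequences s and t satisfy: for every k, |val(s|k) − val(t|k)| ≤ 1 (all same-length prefixes are equal or adjacent) if and only if Σ_{i} s_i/2^{i+1} = Σ_{i} t_i/2^{i+1}, i.e., they represent the same real number in [0,1]. -/

import Mathlib

/-!
The digits after position `k` contribute a number in `[0, 1]` to `2 ^ k * x`, where `x` is the
value of the sequence, so `val(s|k) ≤ 2 ^ k * x ≤ val(s|k) + 1`. Prefix values differing by at
most one therefore force `|x - y| ≤ 2 / 2 ^ k` for every `k`, hence `x = y`; conversely, equal
values squeeze both prefix values into the same window of length one.
-/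

/-- The base-2 value of the length-`k` prefix of a binary sequence. -/
def valPrefix (s : ℕ → Fin 2) (k : ℕ) : ℕ :=
  ∑ i ∈ Finset.range k, (s i : ℕ) * 2 ^ (k - 1 - i)

noncomputable def bitsValue (s : ℕ → Fin 2) : ℝ :=
  ∑' i : ℕ, ((s i : ℕ) : ℝ) / 2 ^ (i + 1)

lemma bit_div_two_pow_le (b : Fin 2) (i : ℕ) :
    ((b : ℕ) : ℝ) / 2 ^ (i + 1) ≤ 1 / 2 / 2 ^ i := by
  have hb : ((b : ℕ) : ℝ) ≤ 1 := by exact_mod_cast b.is_le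
  rw [pow_succ, div_div, mul_comm (2 ^ i)]
  gcongr

lemma summable_bits (s : ℕ → Fin 2) :
    Summable fun i : ℕ => ((s i : ℕ) : ℝ) / 2 ^ (i + 1) :=
  (summable_geometric_two' 1).of_nonneg_of_le (fun _ => by positivity)
    fun i => bit_div_two_pow_le (s i) i

lemma bitsValue_nonneg (s : ℕ → Fin 2) : 0 ≤ bitsValue s :=
  tsum_nonneg fun _ => by positivity

lemma bitsValue_le_one (s : ℕ → Fin 2) : bitsValue s ≤ 1 :=
  calc bitsValue s ≤ ∑' i : ℕ, 1 / 2 / (2 : ℝ) ^ i :=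
        (summable_bits s).tsum_le_tsum (fun i => bit_div_two_pow_le (s i) i)
          (summable_geometric_two' 1)
    _ = 1 := tsum_geometric_two' 1

lemma two_pow_mul_sum_range_bits (s : ℕ → Fin 2) (k : ℕ) :
    2 ^ k * ∑ i ∈ Finset.range k, ((s i : ℕ) : ℝ) / 2 ^ (i + 1) = valPrefix s k := by
  rw [valPrefix, Finset.mul_sum]
  push_cast
  refine Finset.sum_congr rfl fun i hi => ?_
  have hk : k = (k - 1 - i) + (i + 1) := by have := Finset.mem_range.mp hi; omega
  rw [show (2 : ℝ) ^ k = 2 ^ (k - 1 - i) * 2 ^ (i + 1) by rw [← pow_add, ← hk]]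
  field_simp

lemma two_pow_mul_bitsValue (s : ℕ → Fin 2) (k : ℕ) :
    2 ^ k * bitsValue s = valPrefix s k + bitsValue (fun i => s (i + k)) := by
  rw [bitsValue, ← (summable_bits s).sum_add_tsum_nat_add k, mul_add,
    two_pow_mul_sum_range_bits, bitsValue, ← tsum_mul_left]
  congr 1
  refine tsum_congr fun i => ?_
  rw [show i + k + 1 = (i + 1) + k by ring, pow_add]
  field_simp

lemma valPrefix_le_two_pow_mul_bitsValue (s : ℕ → Fin 2) (k : ℕ) :
    (valPrefix s k : ℝ) ≤ 2 ^ k * bitsValue s := by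
  rw [two_pow_mul_bitsValue]
  linarith [bitsValue_nonneg fun i => s (i + k)]

lemma two_pow_mul_bitsValue_le_valPrefix_add_one (s : ℕ → Fin 2) (k : ℕ) :
    2 ^ k * bitsValue s ≤ valPrefix s k + 1 := by
  rw [two_pow_mul_bitsValue]
  linarith [bitsValue_le_one fun i => s (i + k)]

lemma eq_of_forall_abs_sub_mul_two_pow_le {x y C : ℝ} (h : ∀ k : ℕ, |x - y| * 2 ^ k ≤ C) :
    x = y := by
  by_contra hne
  have hpos : 0 < |x - y| := abs_pos.mpr (sub_ne_zero.mpr hne)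
  obtain ⟨k, hk⟩ := pow_unbounded_of_one_lt (C / |x - y|) one_lt_two
  rw [div_lt_iff₀' hpos] at hk
  linarith [h k]

theorem stmt_10 (s t : ℕ → Fin 2) :
    (∀ k : ℕ, |(valPrefix s k : ℤ) - (valPrefix t k : ℤ)| ≤ 1) ↔
      (∑' i : ℕ, ((s i : ℕ) : ℝ) / 2 ^ (i + 1)) =
      (∑' i : ℕ, ((t i : ℕ) : ℝ) / 2 ^ (i + 1)) := by
  change _ ↔ bitsValue s = bitsValue t
  have hs := valPrefix_le_two_pow_mul_bitsValue s
  have hs' := two_pow_mul_bitsValue_le_valPrefix_add_one s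
  have ht := valPrefix_le_two_pow_mul_bitsValue t
  have ht' := two_pow_mul_bitsValue_le_valPrefix_add_one t
  constructor
  · intro hadj
    refine eq_of_forall_abs_sub_mul_two_pow_le (C := 2) fun k => ?_
    have hk : |(valPrefix s k : ℝ) - valPrefix t k| ≤ 1 := by exact_mod_cast hadj k
    rw [abs_le] at hk
    rw [← abs_of_pos (by positivity : (0 : ℝ) < 2 ^ k), ← abs_mul, abs_le]
    constructor <;> linarith [hs k, hs' k, ht k, ht' k]
  · intro heq k
    rw [heq] at hs hs'
    have hk : |(valPrefix s k : ℝ) - valPrefix t k| ≤ 1 := by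
      rw [abs_le]; constructor <;> linarith [hs k, hs' k, ht k, ht' k]
    exact_mod_cast hk
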